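/- Consider a finite two-player game with a charge for randomization, with charge ε > 0. In every Nash equilibrium (σ, τ), both players play deterministic strategies: σ is a pure strategy for player 1 and τ is a pure strategy for player 2. -/
import Mathlib


open scoped Classical

/-- A mixed strategy: nonnegative weights summing to one. -/
def IsMixed {A : Type*} [Fintype A] (σ : A → ℝ) : Prop :=
  (∀ a, 0 ≤ σ a) ∧ ∑ a, σ a = 1

/-- A pure (deterministic) strategy: some action gets probability one. -/
def IsPure {A : Type*} [Fintype A] (σ : A → ℝ) : Prop :=
  ∃ a, σ a = 1

/-- Player 1's payoff in a finite two-player game with a charge `ε` for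
randomization. -/
noncomputable def U₁ {A B : Type*} [Fintype A] [Fintype B]
    (u₁ : A → B → ℝ) (ε : ℝ) (σ : A → ℝ) (τ : B → ℝ) : ℝ :=
  (∑ a, ∑ b, σ a * τ b * u₁ a b) - (if IsPure σ then 0 else ε)

/-- Player 2's payoff in a finite two-player game with a charge `ε` for
randomization. -/
noncomputable def U₂ {A B : Type*} [Fintype A] [Fintype B]
    (u₂ : A → B → ℝ) (ε : ℝ) (σ : A → ℝ) (τ : B → ℝ) : ℝ :=
  (∑ a, ∑ b, σ a * τ b * u₂ a b) - (if IsPure τ then 0 else ε)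

/-- A convex combination is dominated by some coordinate. -/
lemma exists_ge_of_mixed {A : Type*} [Fintype A] [Nonempty A]
    (σ : A → ℝ) (hσ : IsMixed σ) (f : A → ℝ) :
    ∃ a, ∑ a', σ a' * f a' ≤ f a := by
  obtain ⟨a, ha⟩ := Finset.exists_max_image Finset.univ f Finset.univ_nonempty
  refine ⟨a, ?_⟩
  calc ∑ a', σ a' * f a' ≤ ∑ a', σ a' * f a := by
        refine Finset.sum_le_sum fun i _ => ?_
        exact mul_le_mul_of_nonneg_left (ha.2 i (Finset.mem_univ i)) (hσ.1 i)
    _ = f a := by rw [← Finset.sum_mul, hσ.2, one_mul]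

lemma indicator_mixed {A : Type*} [Fintype A] (a : A) :
    IsMixed (fun x : A => if x = a then (1 : ℝ) else 0) := by
  constructor
  · intro x; by_cases h : x = a <;> simp [h]
  · simp

lemma indicator_pure {A : Type*} [Fintype A] (a : A) :
    IsPure (fun x : A => if x = a then (1 : ℝ) else 0) := ⟨a, by simp⟩

/-- With a positive charge `ε > 0` for randomization, in every
Nash equilibrium `(σ, τ)` both players play deterministic (pure) strategies. -/
theorem nash_equilibrium_is_pure
    {A B : Type*} [Fintype A] [Fintype B] [Nonempty A] [Nonempty B]
    (u₁ u₂ : A → B → ℝ) (ε : ℝ) (hε : 0 < ε)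
    (σ : A → ℝ) (τ : B → ℝ) (hσ : IsMixed σ) (hτ : IsMixed τ)
    (hNE₁ : ∀ σ' : A → ℝ, IsMixed σ' → U₁ u₁ ε σ' τ ≤ U₁ u₁ ε σ τ)
    (hNE₂ : ∀ τ' : B → ℝ, IsMixed τ' → U₂ u₂ ε σ τ' ≤ U₂ u₂ ε σ τ) :
    IsPure σ ∧ IsPure τ := by
  constructor
  · by_contra hp
    obtain ⟨a, ha⟩ := exists_ge_of_mixed σ hσ (fun a => ∑ b, τ b * u₁ a b)
    have h := hNE₁ (fun x => if x = a then 1 else 0) (indicator_mixed a)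
    have hU' : U₁ u₁ ε (fun x => if x = a then (1:ℝ) else 0) τ
        = ∑ b, τ b * u₁ a b := by
      rw [U₁, if_pos (indicator_pure a)]
      simp [Finset.sum_ite_eq', ite_mul, Finset.sum_ite_eq]
    have hU : U₁ u₁ ε σ τ = (∑ a', σ a' * ∑ b, τ b * u₁ a' b) - ε := by
      rw [U₁, if_neg hp]
      congr 1
      refine Finset.sum_congr rfl fun a' _ => ?_
      rw [Finset.mul_sum]
      exact Finset.sum_congr rfl fun b _ => by ring
    rw [hU', hU] at h
    linarith
  · by_contra hp
    obtain ⟨b, hb⟩ := exists_ge_of_mixed τ hτ (fun b => ∑ a, σ a * u₂ a b)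
    have h := hNE₂ (fun x => if x = b then 1 else 0) (indicator_mixed b)
    have hU' : U₂ u₂ ε σ (fun x => if x = b then (1:ℝ) else 0)
        = ∑ a, σ a * u₂ a b := by
      rw [U₂, if_pos (indicator_pure b)]
      simp [Finset.sum_ite_eq', ite_mul, mul_ite, Finset.sum_ite_eq]
    have hU : U₂ u₂ ε σ τ = (∑ b', τ b' * ∑ a, σ a * u₂ a b') - ε := by
      rw [U₂, if_neg hp, Finset.sum_comm]
      congr 1
      refine Finset.sum_congr rfl fun b' _ => ?_
      rw [Finset.mul_sum]
      exact Finset.sum_congr rfl fun a _ => by ring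
    rw [hU', hU] at h
    linarith
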